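/- arXiv:1401.1708 — 2 statements merged into one kernel-verified Lean document; each statement's English description precedes it below -/
import Mathlib

section
/- If π is a foliated bivector field on M and φ ∈ C^∞(M), then the bivector field φπ is foliated. Explicitly, writing X_F' = π^#(dF) and X_F = (φπ)^#(dF) = φ X_F', if [X_F', X_G'] = π^#(α'_{F,G}), then [X_F, X_G] = (φπ)^#(α_{F,G}) with α_{F,G} = φ α'_{F,G} + X_F'[φ] dG − X_G'[φ] dF. In particular, every conformally Poisson structure (a product of a smooth function and a Poisson bivector) is foliated. -/
open Matrix

noncomputable def lieBracketVF {n : ℕ} (X Y : (Fin n → ℝ) → (Fin n → ℝ)) :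
    (Fin n → ℝ) → (Fin n → ℝ) :=
  fun m => fderiv ℝ Y m (X m) - fderiv ℝ X m (Y m)

noncomputable def gradf {n : ℕ} (F : (Fin n → ℝ) → ℝ) (m : Fin n → ℝ) : Fin n → ℝ :=
  fun i => fderiv ℝ F m (Pi.single i 1)

noncomputable def ham {n : ℕ} (π : (Fin n → ℝ) → Matrix (Fin n) (Fin n) ℝ)
    (F : (Fin n → ℝ) → ℝ) : (Fin n → ℝ) → (Fin n → ℝ) :=
  fun m => π m *ᵥ gradf F m

def SmoothBiv {n : ℕ} (π : (Fin n → ℝ) → Matrix (Fin n) (Fin n) ℝ) : Prop :=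
  ∀ i j, ContDiff ℝ (⊤ : ℕ∞) fun m => π m i j

def AntiSymmBiv {n : ℕ} (π : (Fin n → ℝ) → Matrix (Fin n) (Fin n) ℝ) : Prop :=
  ∀ m, (π m)ᵀ = -π m

def Foliated {n : ℕ} (π : (Fin n → ℝ) → Matrix (Fin n) (Fin n) ℝ) : Prop :=
  ∀ α β : (Fin n → ℝ) → (Fin n → ℝ), ContDiff ℝ (⊤ : ℕ∞) α → ContDiff ℝ (⊤ : ℕ∞) β →
    ∃ γ : (Fin n → ℝ) → (Fin n → ℝ), ContDiff ℝ (⊤ : ℕ∞) γ ∧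
      ∀ m, lieBracketVF (fun p => π p *ᵥ α p) (fun p => π p *ᵥ β p) m = π m *ᵥ γ m

def WeaklyFoliated {n : ℕ} (π : (Fin n → ℝ) → Matrix (Fin n) (Fin n) ℝ) : Prop :=
  ∀ α β : (Fin n → ℝ) → (Fin n → ℝ), ContDiff ℝ (⊤ : ℕ∞) α → ContDiff ℝ (⊤ : ℕ∞) β →
    ∀ m, ∃ ξ : Fin n → ℝ,
      lieBracketVF (fun p => π p *ᵥ α p) (fun p => π p *ᵥ β p) m = π m *ᵥ ξ

noncomputable def pd {n : ℕ} (f : (Fin n → ℝ) → ℝ) (l : Fin n) (m : Fin n → ℝ) : ℝ :=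
  fderiv ℝ f m (Pi.single l 1)

noncomputable def schouten {n : ℕ} (π : (Fin n → ℝ) → Matrix (Fin n) (Fin n) ℝ)
    (m : Fin n → ℝ) (i j k : Fin n) : ℝ :=
  ∑ l, (π m l i * pd (fun p => π p j k) l m + π m l j * pd (fun p => π p k i) l m
      + π m l k * pd (fun p => π p i j) l m)

noncomputable def pb {n : ℕ} (π : (Fin n → ℝ) → Matrix (Fin n) (Fin n) ℝ)
    (F G : (Fin n → ℝ) → ℝ) (m : Fin n → ℝ) : ℝ :=
  dotProduct (gradf G m) (π m *ᵥ gradf F m)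

noncomputable def jacobianM {n : ℕ} (X : (Fin n → ℝ) → (Fin n → ℝ)) (m : Fin n → ℝ) :
    Matrix (Fin n) (Fin n) ℝ :=
  Matrix.of fun i l => fderiv ℝ (fun p => X p i) m (Pi.single l 1)

noncomputable def lieDerivBiv {n : ℕ} (X : (Fin n → ℝ) → (Fin n → ℝ))
    (π : (Fin n → ℝ) → Matrix (Fin n) (Fin n) ℝ) (m : Fin n → ℝ) :
    Matrix (Fin n) (Fin n) ℝ :=
  (Matrix.of fun i j => fderiv ℝ (fun p => π p i j) m (X m))
    - jacobianM X m * π m - π m * (jacobianM X m)ᵀ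

/-! Since `(φπ)^♯ = φ π^♯`, the Leibniz rule for the bracket of `φX` and `φY` gives
`[φX, φY] = φ² [X, Y] + φ X[φ] Y - φ Y[φ] X`; with `X = π^♯α`, `Y = π^♯β` and
`[X, Y] = π^♯γ`, every term is again in the image of `(φπ)^♯`. -/

section

variable {n : ℕ}

theorem lieBracketVF_smul_smul {φ : (Fin n → ℝ) → ℝ} {X Y : (Fin n → ℝ) → (Fin n → ℝ)}
    {m : Fin n → ℝ} (hφ : DifferentiableAt ℝ φ m) (hX : DifferentiableAt ℝ X m)
    (hY : DifferentiableAt ℝ Y m) :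
    lieBracketVF (fun p => φ p • X p) (fun p => φ p • Y p) m
      = (φ m * φ m) • lieBracketVF X Y m + (φ m * fderiv ℝ φ m (X m)) • Y m
        - (φ m * fderiv ℝ φ m (Y m)) • X m := by
  have hdX : fderiv ℝ (fun p => φ p • X p) m = _ := (hφ.hasFDerivAt.smul hX.hasFDerivAt).fderiv
  have hdY : fderiv ℝ (fun p => φ p • Y p) m = _ := (hφ.hasFDerivAt.smul hY.hasFDerivAt).fderiv
  simp only [lieBracketVF, hdX, hdY, _root_.add_apply, _root_.smul_apply,
    ContinuousLinearMap.smulRight_apply, _root_.map_smul]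
  module

/-- The paper's `α_{F,G}` when `α = dF`, `β = dG` and `γ = α'_{F,G}`. -/
noncomputable def conformalForm (φ : (Fin n → ℝ) → ℝ)
    (π : (Fin n → ℝ) → Matrix (Fin n) (Fin n) ℝ)
    (α β γ : (Fin n → ℝ) → (Fin n → ℝ)) (m : Fin n → ℝ) : Fin n → ℝ :=
  φ m • γ m + fderiv ℝ φ m (π m *ᵥ α m) • β m - fderiv ℝ φ m (π m *ᵥ β m) • α m

theorem lieBracketVF_smul_mulVec {π : (Fin n → ℝ) → Matrix (Fin n) (Fin n) ℝ}
    {φ : (Fin n → ℝ) → ℝ} {α β γ : (Fin n → ℝ) → (Fin n → ℝ)} {m : Fin n → ℝ}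
    (hφ : DifferentiableAt ℝ φ m) (hα : DifferentiableAt ℝ (fun p => π p *ᵥ α p) m)
    (hβ : DifferentiableAt ℝ (fun p => π p *ᵥ β p) m)
    (hγ : lieBracketVF (fun p => π p *ᵥ α p) (fun p => π p *ᵥ β p) m = π m *ᵥ γ m) :
    lieBracketVF (fun p => φ p • (π p *ᵥ α p)) (fun p => φ p • (π p *ᵥ β p)) m
      = (φ m • π m) *ᵥ conformalForm φ π α β γ m := by
  rw [lieBracketVF_smul_smul hφ hα hβ, hγ, conformalForm]
  simp only [Matrix.smul_mulVec, Matrix.mulVec_add, Matrix.mulVec_sub, Matrix.mulVec_smul]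
  module

theorem SmoothBiv.contDiff_mulVec {π : (Fin n → ℝ) → Matrix (Fin n) (Fin n) ℝ}
    (hs : SmoothBiv π) {α : (Fin n → ℝ) → (Fin n → ℝ)} (hα : ContDiff ℝ (⊤ : ℕ∞) α) :
    ContDiff ℝ (⊤ : ℕ∞) (fun m => π m *ᵥ α m) :=
  contDiff_pi.2 fun i => by
    simpa only [Matrix.mulVec, dotProduct] using
      ContDiff.sum fun j _ => (hs i j).mul (contDiff_pi.1 hα j)

theorem contDiff_gradf {F : (Fin n → ℝ) → ℝ} (hF : ContDiff ℝ (⊤ : ℕ∞) F) :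
    ContDiff ℝ (⊤ : ℕ∞) (gradf F) :=
  contDiff_pi.2 fun _ => (hF.fderiv_right (by simp)).clm_apply contDiff_const

theorem SmoothBiv.contDiff_conformalForm {π : (Fin n → ℝ) → Matrix (Fin n) (Fin n) ℝ}
    (hs : SmoothBiv π) {φ : (Fin n → ℝ) → ℝ} {α β γ : (Fin n → ℝ) → (Fin n → ℝ)}
    (hφ : ContDiff ℝ (⊤ : ℕ∞) φ) (hα : ContDiff ℝ (⊤ : ℕ∞) α) (hβ : ContDiff ℝ (⊤ : ℕ∞) β)
    (hγ : ContDiff ℝ (⊤ : ℕ∞) γ) :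
    ContDiff ℝ (⊤ : ℕ∞) (conformalForm φ π α β γ) :=
  have hdφ : ContDiff ℝ (⊤ : ℕ∞) (fderiv ℝ φ) := hφ.fderiv_right (by simp)
  ((hφ.smul hγ).add ((hdφ.clm_apply (hs.contDiff_mulVec hα)).smul hβ)).sub
    ((hdφ.clm_apply (hs.contDiff_mulVec hβ)).smul hα)

end

theorem conformal_multiple_of_foliated_is_foliated_general {n : ℕ}
    (π : (Fin n → ℝ) → Matrix (Fin n) (Fin n) ℝ)
    (hs : SmoothBiv π) (hfol : Foliated π)
    (φ : (Fin n → ℝ) → ℝ) (hφ : ContDiff ℝ (⊤ : ℕ∞) φ) :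
    Foliated (fun m => φ m • π m) ∧
      ∀ (F G : (Fin n → ℝ) → ℝ) (α' : (Fin n → ℝ) → (Fin n → ℝ)),
        ContDiff ℝ (⊤ : ℕ∞) F → ContDiff ℝ (⊤ : ℕ∞) G → ContDiff ℝ (⊤ : ℕ∞) α' →
        (∀ m, lieBracketVF (ham π F) (ham π G) m = π m *ᵥ α' m) →
        ∀ m, lieBracketVF (fun p => φ p • ham π F p) (fun p => φ p • ham π G p) m
          = (φ m • π m) *ᵥ (φ m • α' m
              + fderiv ℝ φ m (ham π F m) • gradf G m
              - fderiv ℝ φ m (ham π G m) • gradf F m) := by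
  have hφd : ∀ m, DifferentiableAt ℝ φ m := hφ.differentiable (by simp)
  have hπd : ∀ {α : (Fin n → ℝ) → (Fin n → ℝ)}, ContDiff ℝ (⊤ : ℕ∞) α →
      Differentiable ℝ (fun p => π p *ᵥ α p) :=
    fun hα => (hs.contDiff_mulVec hα).differentiable (by simp)
  refine ⟨fun α β hα hβ => ?_, fun F G α' hF hG _ hbr m => ?_⟩
  · obtain ⟨γ, hγ, hbr⟩ := hfol α β hα hβ
    refine ⟨conformalForm φ π α β γ, hs.contDiff_conformalForm hφ hα hβ hγ, fun m => ?_⟩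
    simpa only [Matrix.smul_mulVec] using
      lieBracketVF_smul_mulVec (hφd m) (hπd hα m) (hπd hβ m) (hbr m)
  · exact lieBracketVF_smul_mulVec (hφd m) (hπd (contDiff_gradf hF) m)
      (hπd (contDiff_gradf hG) m) (hbr m)

theorem conformal_multiple_of_foliated_is_foliated {n : ℕ}
    (π : (Fin n → ℝ) → Matrix (Fin n) (Fin n) ℝ)
    (hs : SmoothBiv π) (ha : AntiSymmBiv π) (hfol : Foliated π)
    (φ : (Fin n → ℝ) → ℝ) (hφ : ContDiff ℝ (⊤ : ℕ∞) φ) :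
    Foliated (fun m => φ m • π m) ∧
      ∀ (F G : (Fin n → ℝ) → ℝ) (α' : (Fin n → ℝ) → (Fin n → ℝ)),
        ContDiff ℝ (⊤ : ℕ∞) F → ContDiff ℝ (⊤ : ℕ∞) G → ContDiff ℝ (⊤ : ℕ∞) α' →
        (∀ m, lieBracketVF (ham π F) (ham π G) m = π m *ᵥ α' m) →
        ∀ m, lieBracketVF (fun p => φ p • ham π F p) (fun p => φ p • ham π G p) m
          = (φ m • π m) *ᵥ (φ m • α' m
              + fderiv ℝ φ m (ham π F m) • gradf G m
              - fderiv ℝ φ m (ham π G m) • gradf F m) :=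
  conformal_multiple_of_foliated_is_foliated_general π hs hfol φ hφ
end

section
/- If π is a bivector field on M such that at every point m the Schouten bracket satisfies [π,π]_m ∈ Im(∧³π_m^#), then π is weakly foliated: for all F, G ∈ C^∞(M) and every m ∈ M, [X_F, X_G]|_m ∈ Im(π_m^#). Explicitly, if [π,π]_m = ∧³π_m^#(ω) for ω ∈ ∧³T_m*M, then [X_F, X_G]|_m = π_m^#(d_m{F,G} − ι_{(X_F)_m ∧ (X_G)_m} ω). -/
open Matrix

/-! With `X = π α` and `Y = π β`, the product rule splits `[X, Y]` into `π (d_X β - d_Y α)`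
plus terms that are linear in the first derivatives of `π`. Contracting the coordinate Schouten
bracket `[π,π]^{kji}` with `α_k β_j` and using the antisymmetry of `π` and of its derivatives
rewrites those terms as `π (α_k β_j ∂_c π^{jk} - (ι_{X ∧ Y} ω)_c)` as soon as
`[π,π]_m = ∧³π_m(ω)`, so `[X, Y]_m ∈ Im π_m`. For `α = dF`, `β = dG` the Hessians are symmetric,
which turns `d_X dG - d_Y dF + ∂_k F ∂_j G ∂_c π^{jk}` into `∂_c {F, G}`. -/

open Finset

variable {n : ℕ}

lemma Matrix.apply_eq_neg_apply_of_transpose_eq_neg {ι R : Type*} [Neg R] {P : Matrix ι ι R}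
    (hP : Pᵀ = -P) (a b : ι) : P a b = -P b a := by
  simpa using congrFun (congrFun hP b) a

lemma fderiv_apply_eq_sum_pd (f : (Fin n → ℝ) → ℝ) (m v : Fin n → ℝ) :
    fderiv ℝ f m v = ∑ l, v l * pd f l m := by
  conv_lhs => rw [pi_eq_sum_univ' v]
  simp [pd]

lemma differentiableAt_mulVec_apply {π : (Fin n → ℝ) → Matrix (Fin n) (Fin n) ℝ}
    {α : (Fin n → ℝ) → Fin n → ℝ} {m : Fin n → ℝ} (i : Fin n)
    (hπ : ∀ j, DifferentiableAt ℝ (fun p => π p i j) m)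
    (hα : ∀ j, DifferentiableAt ℝ (fun p => α p j) m) :
    DifferentiableAt ℝ (fun p => (π p *ᵥ α p) i) m := by
  simp only [mulVec, dotProduct]
  exact .fun_sum fun j _ => (hπ j).fun_mul (hα j)

lemma fderiv_mulVec_apply {π : (Fin n → ℝ) → Matrix (Fin n) (Fin n) ℝ}
    {α : (Fin n → ℝ) → Fin n → ℝ} {m : Fin n → ℝ} (i : Fin n)
    (hπ : ∀ j, DifferentiableAt ℝ (fun p => π p i j) m)
    (hα : ∀ j, DifferentiableAt ℝ (fun p => α p j) m) (v : Fin n → ℝ) :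
    fderiv ℝ (fun p => (π p *ᵥ α p) i) m v
      = ∑ j, (fderiv ℝ (fun p => π p i j) m v * α m j
          + π m i j * fderiv ℝ (fun p => α p j) m v) := by
  simp only [mulVec, dotProduct]
  rw [fderiv_fun_sum fun j _ => (hπ j).fun_mul (hα j), _root_.sum_apply]
  refine sum_congr rfl fun j _ => ?_
  rw [fderiv_fun_mul (hπ j) (hα j)]
  simp only [_root_.add_apply, _root_.smul_apply, smul_eq_mul]
  ring

lemma fderiv_dotProduct_mulVec {u w : (Fin n → ℝ) → Fin n → ℝ}
    {π : (Fin n → ℝ) → Matrix (Fin n) (Fin n) ℝ} {m : Fin n → ℝ}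
    (hu : ∀ j, DifferentiableAt ℝ (fun p => u p j) m)
    (hπ : ∀ j k, DifferentiableAt ℝ (fun p => π p j k) m)
    (hw : ∀ k, DifferentiableAt ℝ (fun p => w p k) m) (v : Fin n → ℝ) :
    fderiv ℝ (fun p => u p ⬝ᵥ (π p *ᵥ w p)) m v
      = ∑ j, ∑ k, (fderiv ℝ (fun p => u p j) m v * (π m j k * w m k)
          + u m j * (fderiv ℝ (fun p => π p j k) m v * w m k)
          + u m j * (π m j k * fderiv ℝ (fun p => w p k) m v)) := by
  have hπw : ∀ j, DifferentiableAt ℝ (fun p => (π p *ᵥ w p) j) m := fun j =>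
    differentiableAt_mulVec_apply j (hπ j) hw
  simp only [dotProduct]
  rw [fderiv_fun_sum fun j _ => (hu j).fun_mul (hπw j), _root_.sum_apply]
  refine sum_congr rfl fun j _ => ?_
  rw [fderiv_fun_mul (hu j) (hπw j)]
  simp only [_root_.add_apply, _root_.smul_apply, smul_eq_mul,
    fderiv_mulVec_apply j (hπ j) hw]
  simp only [mulVec, dotProduct, mul_sum, sum_mul, ← sum_add_distrib]
  exact sum_congr rfl fun k _ => by ring

section Jacobiator

variable {P : Matrix (Fin n) (Fin n) ℝ} (hP : Pᵀ = -P)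
include hP

lemma sum_mul_pullback_trivector (A B : Fin n → ℝ) (ω : Fin n → Fin n → Fin n → ℝ)
    (i : Fin n) :
    ∑ j, ∑ k, A k * B j * ∑ a, ∑ b, ∑ c, P k a * P j b * P i c * ω a b c
      = ∑ c, P i c * ∑ a, ∑ b, (P *ᵥ A) a * (P *ᵥ B) b * ω a b c := by
  have hPv : ∀ v : Fin n → ℝ, P *ᵥ v = -(v ᵥ* P) := by
    intro v; rw [← mulVec_transpose, hP, neg_mulVec, neg_neg]
  simp only [hPv, Pi.neg_apply, neg_mul_neg, vecMul, dotProduct, mul_sum, sum_mul]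
  simp only [← Fintype.sum_prod_type']
  exact Fintype.sum_equiv ⟨fun ⟨j, k, a, b, c⟩ => ⟨c, a, b, j, k⟩,
    fun ⟨c, a, b, j, k⟩ => ⟨j, k, a, b, c⟩, fun _ => rfl, fun _ => rfl⟩ _ _
    fun _ => by simp only [Equiv.coe_fn_mk]; ring

variable {DP : Fin n → Fin n → Fin n → ℝ} (hDP : ∀ a b l, DP a b l = -DP b a l)
include hDP

lemma sum_mul_schouten_coords (A B : Fin n → ℝ) (i : Fin n) :
    ∑ j, ∑ k, A k * B j * ∑ l, (P l k * DP j i l + P l j * DP i k l + P l i * DP k j l)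
      = ∑ c, P i c * ∑ j, ∑ k, A k * B j * DP j k c
        - (∑ j, (∑ l, (P *ᵥ A) l * DP i j l) * B j
          - ∑ j, (∑ l, (P *ᵥ B) l * DP i j l) * A j) := by
  have h₁ : ∑ c, P i c * ∑ j, ∑ k, A k * B j * DP j k c
      = ∑ j, ∑ k, ∑ l, P i l * (A k * B j * DP j k l) := by
    simp only [mul_sum]; exact sum_comm_cycle.symm
  have h₂ : ∑ j, (∑ l, (P *ᵥ A) l * DP i j l) * B j
      = ∑ j, ∑ k, ∑ l, P l k * A k * DP i j l * B j := by
    simp only [mulVec, dotProduct, sum_mul]; exact sum_congr rfl fun _ _ => sum_comm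
  have h₃ : ∑ j, (∑ l, (P *ᵥ B) l * DP i j l) * A j
      = ∑ j, ∑ k, ∑ l, P l j * B j * DP i k l * A k := by
    simp only [mulVec, dotProduct, sum_mul]; exact sum_comm_cycle
  rw [h₁, h₂, h₃]
  simp only [mul_sum, ← sum_sub_distrib]
  refine sum_congr rfl fun j _ => sum_congr rfl fun k _ => sum_congr rfl fun l _ => ?_
  linear_combination -(A k * B j * DP j k l) * P.apply_eq_neg_apply_of_transpose_eq_neg hP l i
    + (A k * B j * P l i) * hDP k j l + (A k * B j * P l k) * hDP j i l

lemma jacobiator_identity_coords (ω : Fin n → Fin n → Fin n → ℝ)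
    (hω : ∀ i j k, ∑ l, (P l i * DP j k l + P l j * DP k i l + P l k * DP i j l)
      = ∑ a, ∑ b, ∑ c, P i a * P j b * P k c * ω a b c) (A B : Fin n → ℝ) (i : Fin n) :
    ∑ j, (∑ l, (P *ᵥ A) l * DP i j l) * B j - ∑ j, (∑ l, (P *ᵥ B) l * DP i j l) * A j
      = (P *ᵥ fun c => ∑ j, ∑ k, A k * B j * DP j k c
          - ∑ a, ∑ b, (P *ᵥ A) a * (P *ᵥ B) b * ω a b c) i := by
  have h := sum_mul_schouten_coords hP hDP A B i
  simp only [hω, sum_mul_pullback_trivector hP] at h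
  simp only [mulVec, dotProduct, mul_sub, sum_sub_distrib] at h ⊢
  linarith

end Jacobiator

section Bracket

variable {π : (Fin n → ℝ) → Matrix (Fin n) (Fin n) ℝ} {α β : (Fin n → ℝ) → Fin n → ℝ}
  {m : Fin n → ℝ}

lemma pd_antisymm (ha : AntiSymmBiv π) (a b l : Fin n) :
    pd (fun p => π p a b) l m = -pd (fun p => π p b a) l m := by
  have hfun : (fun p => π p a b) = fun p => -π p b a :=
    funext fun p => (π p).apply_eq_neg_apply_of_transpose_eq_neg (ha p) a b
  simp [pd, hfun]

variable (hπ : ∀ i j, DifferentiableAt ℝ (fun p => π p i j) m)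
  (hα : ∀ j, DifferentiableAt ℝ (fun p => α p j) m)
  (hβ : ∀ j, DifferentiableAt ℝ (fun p => β p j) m)
include hπ hα hβ

lemma lieBracketVF_mulVec_apply (i : Fin n) :
    lieBracketVF (fun p => π p *ᵥ α p) (fun p => π p *ᵥ β p) m i
      = (∑ j, fderiv ℝ (fun p => π p i j) m (π m *ᵥ α m) * β m j
          - ∑ j, fderiv ℝ (fun p => π p i j) m (π m *ᵥ β m) * α m j)
        + (π m *ᵥ fun c => fderiv ℝ (fun p => β p c) m (π m *ᵥ α m)
            - fderiv ℝ (fun p => α p c) m (π m *ᵥ β m)) i := by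
  simp only [lieBracketVF, Pi.sub_apply]
  rw [fderiv_pi fun i => differentiableAt_mulVec_apply i (hπ i) hβ,
    fderiv_pi fun i => differentiableAt_mulVec_apply i (hπ i) hα, ContinuousLinearMap.pi_apply,
    ContinuousLinearMap.pi_apply, fderiv_mulVec_apply i (hπ i) hβ,
    fderiv_mulVec_apply i (hπ i) hα]
  simp only [mulVec, dotProduct, mul_sub, sum_sub_distrib, sum_add_distrib]
  ring

theorem lieBracketVF_mulVec_eq (ha : AntiSymmBiv π) (ω : Fin n → Fin n → Fin n → ℝ)
    (hω : ∀ i j k, schouten π m i j k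
      = ∑ a, ∑ b, ∑ c, π m i a * π m j b * π m k c * ω a b c) :
    lieBracketVF (fun p => π p *ᵥ α p) (fun p => π p *ᵥ β p) m
      = π m *ᵥ fun c =>
          fderiv ℝ (fun p => β p c) m (π m *ᵥ α m)
          - fderiv ℝ (fun p => α p c) m (π m *ᵥ β m)
          + (∑ j, ∑ k, α m k * β m j * pd (fun p => π p j k) c m)
          - ∑ a, ∑ b, (π m *ᵥ α m) a * (π m *ᵥ β m) b * ω a b c := by
  funext i
  have hderiv := jacobiator_identity_coords (ha m) (fun a b l => pd_antisymm ha a b l) ω hω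
    (α m) (β m) i
  simp only [← fderiv_apply_eq_sum_pd] at hderiv
  rw [lieBracketVF_mulVec_apply hπ hα hβ, hderiv, ← Pi.add_apply, ← mulVec_add]
  refine congrArg (fun v => (π m *ᵥ v) i) (funext fun c => ?_)
  simp only [Pi.add_apply]
  ring

end Bracket

section Gradient

variable {F G : (Fin n → ℝ) → ℝ} {m : Fin n → ℝ}

lemma differentiableAt_fderiv_of_contDiffAt_two (hF : ContDiffAt ℝ 2 F m) :
    DifferentiableAt ℝ (fderiv ℝ F) m :=
  (hF.fderiv_right (m := 1) le_rfl).differentiableAt one_ne_zero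

lemma differentiableAt_gradf_apply (hF : ContDiffAt ℝ 2 F m) (c : Fin n) :
    DifferentiableAt ℝ (fun p => gradf F p c) m :=
  (differentiableAt_fderiv_of_contDiffAt_two hF).clm_apply (differentiableAt_const _)

lemma pd_gradf_comm (hF : ContDiffAt ℝ 2 F m) (c l : Fin n) :
    pd (fun p => gradf F p c) l m = pd (fun p => gradf F p l) c m := by
  have hd := differentiableAt_fderiv_of_contDiffAt_two hF
  have hsecond : ∀ u v : Fin n → ℝ,
      fderiv ℝ (fun p => fderiv ℝ F p u) m v = fderiv ℝ (fderiv ℝ F) m v u := fun u v => by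
    rw [fderiv_clm_apply hd (differentiableAt_const u)]
    simp
  simp only [pd, gradf, hsecond]
  exact hF.isSymmSndFDerivAt (by simp) _ _

lemma fderiv_gradf_apply (hF : ContDiffAt ℝ 2 F m) (c : Fin n) (v : Fin n → ℝ) :
    fderiv ℝ (fun p => gradf F p c) m v = ∑ l, v l * pd (fun p => gradf F p l) c m := by
  simp only [fderiv_apply_eq_sum_pd, pd_gradf_comm hF c]

lemma gradf_pb_apply {π : (Fin n → ℝ) → Matrix (Fin n) (Fin n) ℝ}
    (hπ : ∀ j k, DifferentiableAt ℝ (fun p => π p j k) m) (hπm : (π m)ᵀ = -π m)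
    (hF : ContDiffAt ℝ 2 F m) (hG : ContDiffAt ℝ 2 G m) (c : Fin n) :
    gradf (pb π F G) m c
      = fderiv ℝ (fun p => gradf G p c) m (π m *ᵥ gradf F m)
        - fderiv ℝ (fun p => gradf F p c) m (π m *ᵥ gradf G m)
        + ∑ j, ∑ k, gradf F m k * gradf G m j * pd (fun p => π p j k) c m := by
  have hpb : gradf (pb π F G) m c = _ := fderiv_dotProduct_mulVec
    (differentiableAt_gradf_apply hG) hπ (differentiableAt_gradf_apply hF) (Pi.single c 1)
  rw [hpb, fderiv_gradf_apply hG, fderiv_gradf_apply hF]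
  simp only [mulVec, dotProduct, sum_mul, sum_add_distrib]
  rw [sum_comm (f := fun l k => π m l k * gradf G m k * pd (fun p => gradf F p l) c m)]
  simp only [← sum_sub_distrib, ← sum_add_distrib]
  refine sum_congr rfl fun j _ => sum_congr rfl fun k _ => ?_
  rw [(π m).apply_eq_neg_apply_of_transpose_eq_neg hπm k j]
  simp only [pd]
  ring

end Gradient

theorem weakly_foliated_of_pointwise_jacobiator {n : ℕ}
    (π : (Fin n → ℝ) → Matrix (Fin n) (Fin n) ℝ)
    (hs : SmoothBiv π) (ha : AntiSymmBiv π)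
    (h : ∀ m : Fin n → ℝ, ∃ ω : Fin n → Fin n → Fin n → ℝ,
      ∀ i j k, schouten π m i j k
        = ∑ a, ∑ b, ∑ c, π m i a * π m j b * π m k c * ω a b c) :
    WeaklyFoliated π ∧
      ∀ F G : (Fin n → ℝ) → ℝ, ContDiff ℝ (⊤ : ℕ∞) F → ContDiff ℝ (⊤ : ℕ∞) G →
        ∀ (m : Fin n → ℝ) (ω : Fin n → Fin n → Fin n → ℝ),
          (∀ i j k, schouten π m i j k
            = ∑ a, ∑ b, ∑ c, π m i a * π m j b * π m k c * ω a b c) →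
          lieBracketVF (ham π F) (ham π G) m
            = π m *ᵥ (gradf (pb π F G) m
                - fun c => ∑ a, ∑ b, ham π F m a * ham π G m b * ω a b c) := by
  have hπ : ∀ m i j, DifferentiableAt ℝ (fun p => π p i j) m := fun m i j =>
    (hs i j).differentiable (by simp) m
  refine ⟨fun α β hα hβ m => ?_, fun F G hF hG m ω hω => ?_⟩
  · obtain ⟨ω, hω⟩ := h m
    have hdiff : ∀ {γ : (Fin n → ℝ) → Fin n → ℝ}, ContDiff ℝ (⊤ : ℕ∞) γ →
        ∀ j, DifferentiableAt ℝ (fun p => γ p j) m := fun hγ j =>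
      (contDiff_pi.mp hγ j).differentiable (by simp) m
    exact ⟨_, lieBracketVF_mulVec_eq (hπ m) (hdiff hα) (hdiff hβ) ha ω hω⟩
  · have hF₂ : ContDiffAt ℝ 2 F m := hF.contDiffAt.of_le (WithTop.coe_le_coe.mpr le_top)
    have hG₂ : ContDiffAt ℝ 2 G m := hG.contDiffAt.of_le (WithTop.coe_le_coe.mpr le_top)
    unfold ham
    rw [lieBracketVF_mulVec_eq (hπ m) (differentiableAt_gradf_apply hF₂)
      (differentiableAt_gradf_apply hG₂) ha ω hω]
    refine congrArg (π m *ᵥ ·) (funext fun c => ?_)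
    rw [Pi.sub_apply, gradf_pb_apply (hπ m) (ha m) hF₂ hG₂]
end
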